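/- Let M and N be matroids on a common finite ground set E and e ∈ E. Then at least one of the following holds: (a) there is a wave (W, S^M, S^N) for (M, N) with e ∉ W such that e lies in the M-closure of W; or (b) there is a cowave (X, T^M, T^N) for (M, N) with e ∈ T^N. -/

import Mathlib

/-!
Write `r` and `s` for the ranks of `M` and `N`. A set `W` carries a wave as soon as it is
*feasible*, i.e. minimises `Y ↦ r Y + s Y + |W \ Y|` over its subsets: this is Edmonds' partition
condition for covering `W` by a set coindependent in `M|W` and one coindependent in `N|W`, whose
complements are the two halves of the wave. By submodularity feasible sets are closed under union,
so `E - e` has a largest feasible subset `W₀`. If (a) fails, then `e ∉ cl_M W₀`, and the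
maximality of `W₀` gives `r W₀ + s W₀ + |Z| + 1 ≤ r (W₀ ∪ Z + e) + s (W₀ ∪ Z)` for every `Z`
avoiding `W₀ + e`. Rewritten with the dual rank formula, this is the partition condition for
`M*` and `N*` on `E - W₀` with `e` forced into the `N*`-part, which yields the cowave of (b).
-/

open Matroid Set

variable {α : Type*}

/-- Deletion of a set from a matroid: restriction to the complement. -/
def Matroid.del (M : Matroid α) (D : Set α) : Matroid α := M ↾ (M.E \ D)

/-- Contraction of a set in a matroid, defined by duality. -/
def Matroid.con (M : Matroid α) (C : Set α) : Matroid α := ((M✶.del C))✶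

/-- A circuit: a minimal dependent set. -/
def IsCircuitOf (M : Matroid α) (C : Set α) : Prop := Minimal M.Dep C

/-- A wave for the pair `(M, N)`: disjoint sets `SM, SN ⊆ X` spanning `X`
in the respective restrictions. -/
def IsWave (M N : Matroid α) (X SM SN : Set α) : Prop :=
  SM ⊆ X ∧ SN ⊆ X ∧ X ⊆ M.E ∧ Disjoint SM SN ∧
  (M ↾ X).Spanning SM ∧ (N ↾ X).Spanning SN

structure IsRkFn (r : Set α → ℕ) : Prop where
  empty : r ∅ = 0
  mono : Monotone r
  insert_le (x : α) (A : Set α) : r (insert x A) ≤ r A + 1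
  submod (A B : Set α) : r (A ∪ B) + r (A ∩ B) ≤ r A + r B

/-- The rank function of the contraction by `x`; meaningful only when `r {x} = 1`. -/
def rkContract (r : Set α → ℕ) (x : α) (Z : Set α) : ℕ := r (insert x Z) - 1

namespace IsRkFn

variable {r r₁ r₂ : Set α → ℕ} {x : α} {s I Z U : Set α}

lemma singleton_le_one (h : IsRkFn r) (x : α) : r {x} ≤ 1 := by
  simpa [h.empty] using h.insert_le x ∅

lemma insert_le_of_subset (h : IsRkFn r) (hZU : Z ⊆ U) (hZ : r (insert x Z) ≤ r Z) :
    r (insert x U) ≤ r U := by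
  have hsub := h.submod U (insert x Z)
  rw [union_insert, union_eq_self_of_subset_right hZU] at hsub
  have := h.mono (subset_inter hZU (subset_insert x Z))
  omega

lemma one_le_insert (h : IsRkFn r) (hx : r {x} = 1) (Z : Set α) : 1 ≤ r (insert x Z) :=
  hx ▸ h.mono (singleton_subset_iff.2 (mem_insert x Z))

lemma contract (h : IsRkFn r) (hx : r {x} = 1) : IsRkFn (rkContract r x) where
  empty := by simp [rkContract, hx]
  mono A B hAB := Nat.sub_le_sub_right (h.mono (insert_subset_insert hAB)) 1
  insert_le y A := by
    have := h.insert_le y (insert x A)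
    rw [insert_comm] at this
    have := h.one_le_insert hx A
    simp only [rkContract]
    omega
  submod A B := by
    have := h.submod (insert x A) (insert x B)
    rw [← insert_union_distrib, ← insert_inter_distrib] at this
    have := h.one_le_insert hx (A ∪ B)
    have := h.one_le_insert hx (A ∩ B)
    simp only [rkContract]
    omega

lemma insert_eq_ncard_of_rkContract_eq (h : IsRkFn r) (hx : r {x} = 1) (hxI : x ∉ I)
    (hI : I.Finite) (hcI : rkContract r x I = I.ncard) :
    r (insert x I) = (insert x I).ncard := by
  have := h.one_le_insert hx I
  rw [ncard_insert_of_notMem hxI hI]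
  simp only [rkContract] at hcI
  omega

lemma rkContract_or_exists_tight (h₁ : IsRkFn r₁) (h₂ : r₂ ∅ = 0)
    (hc : ∀ Z ⊆ s, Z.ncard ≤ r₁ Z + r₂ Z) :
    (r₁ {x} = 1 ∧ ∀ Z ⊆ s, Z.ncard ≤ rkContract r₁ x Z + r₂ Z) ∨
      ∃ Z ⊆ s, r₁ Z + r₂ Z ≤ Z.ncard ∧ r₁ (insert x Z) ≤ r₁ Z := by
  obtain hx | hx : r₁ {x} = 0 ∨ r₁ {x} = 1 := by have := h₁.singleton_le_one x; omega
  · exact .inr ⟨∅, empty_subset s, by simp [h₁.empty, h₂], by simp [h₁.empty, hx]⟩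
  by_cases hcon : ∀ Z ⊆ s, Z.ncard ≤ rkContract r₁ x Z + r₂ Z
  · exact .inl ⟨hx, hcon⟩
  push Not at hcon
  obtain ⟨Z, hZ, hlt⟩ := hcon
  have := hc Z hZ
  have := h₁.mono (subset_insert x Z)
  simp only [rkContract] at hlt
  exact .inr ⟨Z, hZ, by omega, by omega⟩

/-- A set `Z` is tight when `r₁ Z + r₂ Z ≤ |Z|`. The union of a tight set spanning `x` in `r₁`
and one spanning `x` in `r₂` is, by submodularity, tight and spans `x` in both, which the covering
condition at `insert x (Z₁ ∪ Z₂)` forbids. -/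
lemma false_of_tight (h₁ : IsRkFn r₁) (h₂ : IsRkFn r₂) (hs : s.Finite) (hx : x ∉ s)
    (hc : ∀ Z ⊆ insert x s, Z.ncard ≤ r₁ Z + r₂ Z) {Z₁ Z₂ : Set α} (hZ₁ : Z₁ ⊆ s)
    (hZ₂ : Z₂ ⊆ s) (ht₁ : r₁ Z₁ + r₂ Z₁ ≤ Z₁.ncard) (ht₂ : r₁ Z₂ + r₂ Z₂ ≤ Z₂.ncard)
    (hx₁ : r₁ (insert x Z₁) ≤ r₁ Z₁) (hx₂ : r₂ (insert x Z₂) ≤ r₂ Z₂) : False := by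
  have hU : Z₁ ∪ Z₂ ⊆ s := union_subset hZ₁ hZ₂
  have := h₁.insert_le_of_subset (subset_union_left (t := Z₂)) hx₁
  have := h₂.insert_le_of_subset (subset_union_right (s := Z₁)) hx₂
  have hcU := hc _ (insert_subset_insert hU)
  rw [ncard_insert_of_notMem (fun h => hx (hU h)) (hs.subset hU)] at hcU
  have := hc (Z₁ ∩ Z₂) (inter_subset_left.trans (hZ₁.trans (subset_insert x s)))
  have := ncard_union_add_ncard_inter Z₁ Z₂ (hs.subset hZ₁) (hs.subset hZ₂)
  have := h₁.submod Z₁ Z₂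
  have := h₂.submod Z₁ Z₂
  omega

/-- Edmonds' matroid partition theorem, for abstract rank functions. -/
theorem exists_union_eq (h₁ : IsRkFn r₁) (h₂ : IsRkFn r₂) {E : Set α} (hE : E.Finite)
    (hc : ∀ Z ⊆ E, Z.ncard ≤ r₁ Z + r₂ Z) :
    ∃ I J, I ∪ J = E ∧ r₁ I = I.ncard ∧ r₂ J = J.ncard := by
  induction E, hE using Set.Finite.induction_on generalizing r₁ r₂ with
  | empty => exact ⟨∅, ∅, union_empty ∅, by simp [h₁.empty], by simp [h₂.empty]⟩
  | @insert x s hx hs ih =>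
    have hcs : ∀ Z ⊆ s, Z.ncard ≤ r₁ Z + r₂ Z := fun Z hZ => hc Z (hZ.trans (subset_insert x s))
    obtain ⟨hx₁, hc₁⟩ | ⟨Z₁, hZ₁, ht₁, hs₁⟩ := h₁.rkContract_or_exists_tight (x := x) h₂.empty hcs
    · obtain ⟨I, J, hIJ, hI, hJ⟩ := ih (h₁.contract hx₁) h₂ hc₁
      refine ⟨insert x I, J, by rw [insert_union, hIJ], ?_, hJ⟩
      exact h₁.insert_eq_ncard_of_rkContract_eq hx₁ (fun h => hx (hIJ ▸ subset_union_left h))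
        (hs.subset (hIJ ▸ subset_union_left)) hI
    obtain ⟨hx₂, hc₂⟩ | ⟨Z₂, hZ₂, ht₂, hs₂⟩ := h₂.rkContract_or_exists_tight (x := x) h₁.empty
      fun Z hZ => (hcs Z hZ).trans_eq (add_comm _ _)
    · obtain ⟨J, I, hJI, hJ, hI⟩ := ih (h₂.contract hx₂) h₁ hc₂
      refine ⟨I, insert x J, by rw [union_insert, union_comm, hJI], hI, ?_⟩
      exact h₂.insert_eq_ncard_of_rkContract_eq hx₂ (fun h => hx (hJI ▸ subset_union_left h))
        (hs.subset (hJI ▸ subset_union_left)) hJ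
    exact (h₁.false_of_tight h₂ hs hx hc hZ₁ hZ₂ ht₁ (by omega) hs₁ hs₂).elim

end IsRkFn

namespace Set

theorem ncard_sdiff_add_ncard_sdiff {s t u : Set α} (hs : s.Finite) (hts : t ⊆ s) (hut : u ⊆ t) :
    (s \ t).ncard + (t \ u).ncard = (s \ u).ncard := by
  rw [← sdiff_union_sdiff_cancel hts hut,
    ncard_union_eq (disjoint_sdiff_left.mono_right sdiff_subset) hs.sdiff (hs.subset hts).sdiff]

end Set

/-- The rank condition under which `W` carries a wave (`Matroid.exists_wave_of_feasible`). -/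
def WaveFeasible (r₁ r₂ : Set α → ℕ) (W : Set α) : Prop :=
  ∀ Y ⊆ W, r₁ W + r₂ W ≤ r₁ Y + r₂ Y + (W \ Y).ncard

namespace WaveFeasible

variable {r₁ r₂ : Set α → ℕ} {V W Z₁ Z₂ : Set α} {x : α}

lemma union (h₁ : IsRkFn r₁) (h₂ : IsRkFn r₂) (hfin : (Z₁ ∪ Z₂).Finite)
    (f₁ : WaveFeasible r₁ r₂ Z₁) (f₂ : WaveFeasible r₁ r₂ Z₂) : WaveFeasible r₁ r₂ (Z₁ ∪ Z₂) := by
  intro Y hY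
  have hYZ : Y ∪ Z₁ ∪ Z₂ = Z₁ ∪ Z₂ := by rw [union_assoc, union_eq_self_of_subset_left hY]
  have a₁ := f₁ (Y ∩ Z₁) inter_subset_right
  have a₂ := f₂ ((Y ∪ Z₁) ∩ Z₂) inter_subset_right
  rw [sdiff_inter_self_eq_sdiff] at a₁ a₂
  have s₁ := h₁.submod Y Z₁
  have s₂ := h₂.submod Y Z₁
  have s₃ := h₁.submod (Y ∪ Z₁) Z₂
  have s₄ := h₂.submod (Y ∪ Z₁) Z₂
  rw [hYZ] at s₃ s₄
  have hc := ncard_sdiff_add_ncard_sdiff hfin (union_subset hY subset_union_left)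
    (subset_union_left : Y ⊆ Y ∪ Z₁)
  rw [union_sdiff_left, show (Z₁ ∪ Z₂) \ (Y ∪ Z₁) = Z₂ \ (Y ∪ Z₁) by tauto_set] at hc
  omega

lemma sUnion (h₁ : IsRkFn r₁) (h₂ : IsRkFn r₂) {𝒲 : Set (Set α)} (hfin : (⋃₀ 𝒲).Finite)
    (h𝒲 : ∀ W ∈ 𝒲, WaveFeasible r₁ r₂ W) : WaveFeasible r₁ r₂ (⋃₀ 𝒲) := by
  have h𝒲fin : 𝒲.Finite := hfin.finite_subsets.subset fun W hW => subset_sUnion_of_mem hW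
  induction 𝒲, h𝒲fin using Set.Finite.induction_on with
  | empty => simp [WaveFeasible]
  | @insert W 𝒲 _ _ ih =>
    rw [sUnion_insert] at hfin ⊢
    exact (h𝒲 W (mem_insert W 𝒲)).union h₁ h₂ hfin
      (ih (hfin.subset subset_union_right) fun W' hW' => h𝒲 W' (mem_insert_of_mem W hW'))

lemma add_ncard_le_of_maximal (hV : V.Finite) (hWV : W ⊆ V) (hW : WaveFeasible r₁ r₂ W)
    (hmax : ∀ Y ⊆ V, WaveFeasible r₁ r₂ Y → Y ⊆ W) {Y : Set α} (hY : Y ⊆ V) :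
    r₁ W + r₂ W + (V \ W).ncard ≤ r₁ Y + r₂ Y + (V \ Y).ncard := by
  obtain ⟨Y₀, hY₀V, hY₀min⟩ := exists_min_image {Y | Y ⊆ V}
    (fun Y => r₁ Y + r₂ Y + (V \ Y).ncard) hV.finite_subsets ⟨V, (subset_rfl : V ⊆ V)⟩
  -- a minimiser over the subsets of `V` is feasible, hence contained in `W`
  have hY₀ : WaveFeasible r₁ r₂ Y₀ := fun Y hY => by
    have := hY₀min Y (hY.trans hY₀V)
    have := ncard_sdiff_add_ncard_sdiff hV hY₀V hY
    omega
  have := hW Y₀ (hmax Y₀ hY₀V hY₀)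
  have := ncard_sdiff_add_ncard_sdiff hV hWV (hmax Y₀ hY₀V hY₀)
  have := hY₀min Y hY
  omega

lemma of_insert_le (h₁ : Monotone r₁) (hV : V.Finite) (hWV : W ⊆ V)
    (hW : WaveFeasible r₁ r₂ W) (hmax : ∀ Y ⊆ V, WaveFeasible r₁ r₂ Y → Y ⊆ W)
    (hx : r₁ (insert x V) + r₂ V ≤ r₁ W + r₂ W + (V \ W).ncard) :
    WaveFeasible r₁ r₂ V ∧ r₁ (insert x V) ≤ r₁ V := by
  have hmin := fun Y (hY : Y ⊆ V) => add_ncard_le_of_maximal hV hWV hW hmax hY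
  have := h₁ (subset_insert x V)
  refine ⟨fun Y hY => ?_, ?_⟩
  · have := hmin Y hY
    omega
  · have := hmin V subset_rfl
    rw [sdiff_self, ncard_empty] at this
    omega

end WaveFeasible

namespace Matroid

variable {M : Matroid α} {S X : Set α} {e : α}

/-- Junk value `0` on sets of infinite rank. -/
noncomputable def rk (M : Matroid α) (X : Set α) : ℕ := (M.eRk X).toNat

lemma cast_rk [M.RankFinite] (X : Set α) : (M.rk X : ℕ∞) = M.eRk X :=
  ENat.natCast_toNat (M.isRkFinite_set X).eRk_lt_top.ne

lemma restrict_rk_eq (M : Matroid α) {R : Set α} (hXR : X ⊆ R) : (M ↾ R).rk X = M.rk X := by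
  rw [rk, rk, restrict_eRk_eq _ hXR]

lemma rk_isRkFn (M : Matroid α) [M.RankFinite] : IsRkFn M.rk where
  empty := by rw [rk, eRk_empty, ENat.toNat_zero]
  mono X Y hXY := by
    have := M.eRk_mono hXY
    rwa [← cast_rk, ← cast_rk, Nat.cast_le] at this
  insert_le e X := by
    have := M.eRk_insert_le_add_one e X
    rwa [← cast_rk, ← cast_rk, ← Nat.cast_one, ← Nat.cast_add, Nat.cast_le] at this
  submod X Y := by
    have := M.eRk_inter_add_eRk_union_le X Y
    rw [← cast_rk, ← cast_rk, ← cast_rk, ← cast_rk, ← Nat.cast_add, ← Nat.cast_add,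
      Nat.cast_le] at this
    omega

lemma rk_dual_add [M.Finite] (hX : X ⊆ M.E) :
    M✶.rk X + M.rk M.E = M.rk (M.E \ X) + X.ncard := by
  have := M.eRk_dual_add_eRank X hX
  rw [eRank_def, ← cast_rk, ← cast_rk, ← cast_rk, ← (M.ground_finite.subset hX).cast_ncard_eq,
    ← Nat.cast_add, ← Nat.cast_add] at this
  exact_mod_cast this

lemma spanning_of_rk_ground_le [M.RankFinite] (hS : S ⊆ M.E) (h : M.rk M.E ≤ M.rk S) :
    M.Spanning S := by
  rwa [spanning_iff_eRk_le hS, eRank_def, ← cast_rk, ← cast_rk, Nat.cast_le]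

lemma rk_insert_of_notMem_closure [M.RankFinite] (he : e ∈ M.E) (heX : e ∉ M.closure X) :
    M.rk (insert e X) = M.rk X + 1 := by
  have := eRk_insert_eq_add_one ⟨he, heX⟩
  rw [← cast_rk, ← cast_rk] at this
  exact_mod_cast this


/-- Cover `X \ D` by a set `I` coindependent in `P|(X \ D)` and a set `J` coindependent in `Q|X`;
then `(X \ D) \ I` and `X \ J` form the wave. -/
theorem exists_wave_of_rk (P Q : Matroid α) {D : Set α} (hXE : X ⊆ P.E) (hX : X.Finite)
    (hD : D ⊆ X) (hrD : P.rk (X \ D) = P.rk X)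
    (h : ∀ Z ⊆ X \ D, P.rk X + Q.rk X ≤ Z.ncard + P.rk ((X \ D) \ Z) + Q.rk (X \ Z)) :
    ∃ S T, IsWave P Q X S T ∧ D ⊆ T := by
  have : (P ↾ X).Finite := ⟨hX⟩
  have : (P ↾ (X \ D)).Finite := ⟨hX.sdiff⟩
  have : (Q ↾ X).Finite := ⟨hX⟩
  have dP : ∀ Z ⊆ X \ D, (P ↾ (X \ D))✶.rk Z + P.rk X = P.rk ((X \ D) \ Z) + Z.ncard :=
    fun Z hZ => by
      have := (P ↾ (X \ D)).rk_dual_add hZ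
      rwa [restrict_ground_eq, restrict_rk_eq _ subset_rfl, restrict_rk_eq _ sdiff_subset,
        hrD] at this
  have dQ : ∀ Z ⊆ X, (Q ↾ X)✶.rk Z + Q.rk X = Q.rk (X \ Z) + Z.ncard := fun Z hZ => by
    have := (Q ↾ X).rk_dual_add hZ
    rwa [restrict_ground_eq, restrict_rk_eq _ subset_rfl, restrict_rk_eq _ sdiff_subset] at this
  obtain ⟨I, J, hIJ, hI, hJ⟩ := ((P ↾ (X \ D))✶.rk_isRkFn).exists_union_eq ((Q ↾ X)✶.rk_isRkFn)
    hX.sdiff fun Z hZ => by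
      have := dP Z hZ
      have := dQ Z (hZ.trans sdiff_subset)
      have := h Z hZ
      omega
  have hIG : I ⊆ X \ D := hIJ.symm ▸ subset_union_left
  have hJG : J ⊆ X \ D := hIJ.symm ▸ subset_union_right
  refine ⟨(X \ D) \ I, X \ J, ⟨sdiff_subset.trans sdiff_subset, sdiff_subset, hXE, ?_, ?_, ?_⟩, ?_⟩
  · refine disjoint_left.2 fun y hyS hyT => ?_
    obtain hyI | hyJ := (hIJ ▸ hyS.1 : y ∈ I ∪ J)
    exacts [hyS.2 hyI, hyT.2 hyJ]
  · refine spanning_of_rk_ground_le (sdiff_subset.trans sdiff_subset) ?_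
    rw [restrict_ground_eq, restrict_rk_eq _ subset_rfl,
      restrict_rk_eq _ (sdiff_subset.trans sdiff_subset)]
    have := dP I hIG
    omega
  · refine spanning_of_rk_ground_le sdiff_subset ?_
    rw [restrict_ground_eq, restrict_rk_eq _ subset_rfl, restrict_rk_eq _ sdiff_subset]
    have := dQ J (hJG.trans sdiff_subset)
    omega
  · exact fun d hd => ⟨hD hd, fun hdJ => (hJG hdJ).2 hd⟩

lemma exists_wave_of_feasible (M N : Matroid α) {W : Set α} (hWE : W ⊆ M.E) (hW : W.Finite)
    (hf : WaveFeasible M.rk N.rk W) : ∃ S T, IsWave M N W S T := by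
  obtain ⟨S, T, hw, -⟩ := exists_wave_of_rk M N hWE hW (empty_subset W) (by rw [sdiff_empty])
    fun Z hZ => by
      rw [sdiff_empty] at hZ ⊢
      have := hf (W \ Z) sdiff_subset
      rw [sdiff_sdiff_cancel_left hZ] at this
      omega
  exact ⟨S, T, hw⟩


lemma exists_cowave_of_rk (M N : Matroid α) [M.Finite] [N.Finite] (hE : M.E = N.E) {W : Set α}
    (hW : W ⊆ M.E) (he : e ∈ M.E) (hecl : e ∉ M.closure W)
    (h : ∀ Z ⊆ (M.E \ W) \ {e},
      M.rk W + N.rk W + Z.ncard + 1 ≤ M.rk (insert e (W ∪ Z)) + N.rk (W ∪ Z)) :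
    ∃ TM TN, IsWave M✶ N✶ (M.E \ W) TM TN ∧ e ∈ TN := by
  have heX : e ∈ M.E \ W := ⟨he, fun heW => hecl (M.subset_closure W hW heW)⟩
  have he' : {e} ⊆ M.E := singleton_subset_iff.2 he
  have dM : ∀ Y ⊆ M.E, M✶.rk Y + M.rk M.E = M.rk (M.E \ Y) + Y.ncard :=
    fun Y hY => M.rk_dual_add hY
  have dN : ∀ Y ⊆ M.E, N✶.rk Y + N.rk M.E = N.rk (M.E \ Y) + Y.ncard := by
    rw [hE]; exact fun Y hY => N.rk_dual_add hY
  have hXfin : (M.E \ W).Finite := M.ground_finite.sdiff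
  have hX := dM (M.E \ W) sdiff_subset
  have hXN := dN (M.E \ W) sdiff_subset
  rw [sdiff_sdiff_cancel_left hW] at hX hXN
  have hXe := dM ((M.E \ W) \ {e}) (sdiff_subset.trans sdiff_subset)
  rw [sdiff_sdiff_eq_sdiff_union he', sdiff_sdiff_cancel_left hW, union_singleton,
    rk_insert_of_notMem_closure he hecl] at hXe
  have hcard := ncard_sdiff_singleton_add_one heX hXfin
  obtain ⟨TM, TN, hw, heT⟩ := exists_wave_of_rk M✶ N✶ (X := M.E \ W) (D := {e}) sdiff_subset
    hXfin (singleton_subset_iff.2 heX) (by omega) fun Z hZ => by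
      have hZX : Z ⊆ M.E \ W := hZ.trans sdiff_subset
      have hZ₁ := dM (((M.E \ W) \ {e}) \ Z) (sdiff_subset.trans (sdiff_subset.trans sdiff_subset))
      have hZ₂ := dN ((M.E \ W) \ Z) (sdiff_subset.trans sdiff_subset)
      have hZE : Z ⊆ M.E := hZX.trans sdiff_subset
      rw [sdiff_sdiff_eq_sdiff_union hZE, sdiff_sdiff_eq_sdiff_union he',
        sdiff_sdiff_cancel_left hW, union_singleton, insert_union] at hZ₁
      rw [sdiff_sdiff_eq_sdiff_union hZE, sdiff_sdiff_cancel_left hW] at hZ₂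
      have := ncard_sdiff_add_ncard_of_subset hZ (hXfin.sdiff)
      have := ncard_sdiff_add_ncard_of_subset hZX hXfin
      have := h Z hZ
      omega
  exact ⟨TM, TN, hw, heT rfl⟩

end Matroid

/-- At least one of the promises `M₊` and `M₋^*` is attainable in any arena. -/
theorem Mplus_or_Mminus_star (M N : Matroid α) (hE : M.E = N.E) (hfin : M.E.Finite)
    (e : α) (he : e ∈ M.E) :
    (∃ W SM SN, IsWave M N W SM SN ∧ e ∉ W ∧ e ∈ M.closure W) ∨
    (∃ X TM TN, IsWave M✶ N✶ X TM TN ∧ e ∈ TN) := by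
  have : M.Finite := ⟨hfin⟩
  have : N.Finite := ⟨hE ▸ hfin⟩
  refine or_iff_not_imp_left.2 fun hA => ?_
  have hnot : ∀ V ⊆ M.E \ {e}, WaveFeasible M.rk N.rk V → e ∉ M.closure V := fun V hV hVf hecl =>
    have hVE : V ⊆ M.E := hV.trans sdiff_subset
    have ⟨S, T, hw⟩ := M.exists_wave_of_feasible N hVE (hfin.subset hVE) hVf
    hA ⟨V, S, T, hw, fun h => (hV h).2 rfl, hecl⟩
  set W₀ := ⋃₀ {W | W ⊆ M.E \ {e} ∧ WaveFeasible M.rk N.rk W}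
  have hW₀e : W₀ ⊆ M.E \ {e} := sUnion_subset fun W hW => hW.1
  have hW₀ : WaveFeasible M.rk N.rk W₀ := WaveFeasible.sUnion M.rk_isRkFn N.rk_isRkFn
    (hfin.subset (hW₀e.trans sdiff_subset)) fun W hW => hW.2
  refine ⟨_, exists_cowave_of_rk M N hE (hW₀e.trans sdiff_subset) he (hnot W₀ hW₀e hW₀)
    fun Z hZ => ?_⟩
  -- otherwise `W₀ ∪ Z` is feasible and spans `e`, and (a) holds
  by_contra! hlt
  have hV : W₀ ∪ Z ⊆ M.E \ {e} := union_subset hW₀e fun z hz => ⟨(hZ hz).1.1, (hZ hz).2⟩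
  have hVW₀ : (W₀ ∪ Z) \ W₀ = Z := by tauto_set
  obtain ⟨hVf, hle⟩ := WaveFeasible.of_insert_le M.rk_isRkFn.mono
    (hfin.subset (hV.trans sdiff_subset)) subset_union_left hW₀ (fun Y hY hYf => subset_sUnion_of_mem ⟨hY.trans hV, hYf⟩)
    (x := e) (by rw [hVW₀]; omega)
  refine hnot _ hV hVf (by_contra fun hecl => ?_)
  have := rk_insert_of_notMem_closure he hecl
  omega
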